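/- Let m be a positive integer with 2m ≢ 1 (mod 3), n = 3m, q = 2^n, and let δ ∈ F_q satisfy Tr_m^{3m}(δ) = 0. Define F : F_q → F_q by F(x) = (x^{2^m} + x + δ)^{2^{3m−1} + 2^{m−1}} + x. Then for every c ∈ F_q not in the subfield F_{2^m} (i.e., c^{2^m} ≠ c), F is APcN: for all a, b ∈ F_q the equation F(x+a) + c·F(x) = b has at most two solutions x ∈ F_q, and there exist a, b ∈ F_q for which it has exactly two solutions. -/

import Mathlib

/-!
Write `σ x = x ^ 2 ^ m`, so that `σ³ = id`, and `T x = σ x + x` (`coboundary`). In characteristic 2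
squaring is additive and `(w ^ (2 ^ (3m-1) + 2 ^ (m-1)))² = w σ(w)`, so `G(x)² = u σ(u) + x²` with
`u = T x + δ`. Hence if `x₀` solves `G(x + a) + c G(x) = b`, then `x₀ + e` is a solution iff
`R(e) = (1 + c²)(E σ(E) + ⟨E, U⟩ + e²) + ⟨E, A⟩` (`cDiffSq`) vanishes, where `E = T e`,
`⟨x, y⟩ = x σ(y) + σ(x) y` (`pairing`), and `U = T x₀ + δ`, `A = T a` have relative trace zero.

Combining `R(e) = 0` with its image under `σ` gives `(c + σ c)² ⟨E, A⟩ = ((1 + c)(1 + σ c) σ²E)²`,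
and applying `σ` once more shows that `σ²E / E` depends only on `c`. So two nonzero roots `e`, `f`
have `T e = ρ T f` with `σ ρ = ρ`; then `⟨T e, A⟩` equals both `ρ ⟨T f, A⟩` and `ρ² ⟨T f, A⟩`, so
`ρ = 1`, and `R(e) - R(f) = (1 + c²)(e + f)²` forces `e = f`.

For a pair of solutions, note that `y ↦ ⟨E, T y⟩` maps onto the fixed field of `σ`, because its
kernel has at most `2 ^ (2m)` elements; this lets one choose `x₀` and `a` with `R(e) = 0` for
`e² = σ (1 + c²)⁻¹`.
-/

theorem AddSubgroup.card_le_card_ker_mul_card_map {G H : Type*} [AddGroup G] [AddGroup H]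
    [Finite G] (f : G →+ H) (S : AddSubgroup G) :
    Nat.card S ≤ Nat.card f.ker * Nat.card (S.map f) := by
  rw [← AddSubgroup.relIndex_ker, AddSubgroup.relIndex,
    ← AddSubgroup.card_mul_index (f.ker.addSubgroupOf S)]
  gcongr
  exact Nat.card_le_card_of_injective (fun x => ⟨x.1.1, x.2⟩)
    fun x y h => Subtype.ext (Subtype.ext (congrArg Subtype.val h :))

namespace CubicFrobenius

variable {L : Type*} [Field L] (σ : L →+* L)

def coboundary : L →+ L := σ.toAddMonoidHom + AddMonoidHom.id L

def relTrace (x : L) : L := x + σ x + σ (σ x)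

def pairing (x y : L) : L := x * σ y + σ x * y

def pairingHom (x : L) : L →+ L :=
  AddMonoidHom.mk' (pairing σ x) fun y z => by simp only [pairing, map_add]; ring

def cDiffQuad (U e : L) : L :=
  coboundary σ e * σ (coboundary σ e) + pairing σ (coboundary σ e) U + e ^ 2

def cDiffSq (c U A e : L) : L :=
  (1 + c ^ 2) * cDiffQuad σ U e + pairing σ (coboundary σ e) A

@[simp] theorem coboundary_apply (x : L) : coboundary σ x = σ x + x := rfl

@[simp] theorem pairingHom_apply (x y : L) : pairingHom σ x y = pairing σ x y := rfl

variable {σ}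

theorem pairing_mul_left_of_map_eq {ρ : L} (hρ : σ ρ = ρ) (x y : L) :
    pairing σ (ρ * x) y = ρ * pairing σ x y := by
  rw [pairing, pairing, map_mul, hρ]
  ring

theorem cDiffSq_zero (c U A : L) : cDiffSq σ c U A 0 = 0 := by
  simp [cDiffSq, cDiffQuad, pairing]

theorem map_ne_of_map_ne {c : L} (hc : σ c ≠ c) : σ (σ c) ≠ σ c :=
  fun h => hc (σ.injective h)

variable [CharP L 2]

theorem mem_ker_coboundary {x : L} : x ∈ (coboundary σ).ker ↔ σ x = x := by
  rw [AddMonoidHom.mem_ker, coboundary_apply, CharTwo.add_eq_zero]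

theorem map_pairing {x y : L} (hx : relTrace σ x = 0) (hy : relTrace σ y = 0) :
    σ (pairing σ x y) = pairing σ x y := by
  simp only [relTrace, pairing, map_add, map_mul] at hx hy ⊢
  grind


theorem one_add_ne_zero_of_map_ne {c : L} (hc : σ c ≠ c) : 1 + c ≠ 0 := fun h =>
  hc (by rw [← CharTwo.add_eq_zero.mp h, map_one])

theorem one_add_sq_ne_zero_of_map_ne {c : L} (hc : σ c ≠ c) : 1 + c ^ 2 ≠ 0 := by
  rw [← one_pow 2, ← CharTwo.add_sq]
  exact pow_ne_zero 2 (one_add_ne_zero_of_map_ne hc)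

theorem coboundary_ne_zero_of_cDiffSq_eq_zero {c U A e : L} (hc : σ c ≠ c) (he : e ≠ 0)
    (h : cDiffSq σ c U A e = 0) : coboundary σ e ≠ 0 := by
  intro hE
  have : ((1 + c) * e) ^ 2 = 0 := by
    simpa [cDiffSq, cDiffQuad, pairing, hE, CharTwo.add_sq, mul_pow] using h
  exact mul_ne_zero (one_add_ne_zero_of_map_ne hc) he (pow_eq_zero_iff two_ne_zero |>.mp this)

theorem card_ker_pairingHom_le [Finite L] {E : L} (hE : E ≠ 0) :
    Nat.card (pairingHom σ E).ker ≤ Nat.card (coboundary σ).ker := by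
  have hσE : σ E ≠ 0 := (map_ne_zero σ).mpr hE
  refine Nat.card_le_card_of_injective (fun z => ⟨z.1 / E, ?_⟩) fun z w h => ?_
  · have hz := z.2
    rw [AddMonoidHom.mem_ker, pairingHom_apply, pairing, CharTwo.add_eq_zero] at hz
    rw [mem_ker_coboundary, map_div₀, div_eq_div_iff hσE hE]
    linear_combination hz
  · exact Subtype.ext ((div_left_inj' hE).mp (congrArg Subtype.val h :))

section Cubic

variable (hσ : ∀ x, σ (σ (σ x)) = x)
include hσ

theorem relTrace_coboundary (x : L) : relTrace σ (coboundary σ x) = 0 := by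
  simp only [relTrace, coboundary_apply, map_add, hσ]
  grind

theorem relTrace_coboundary_add {δ : L} (hδ : relTrace σ δ = 0) (x : L) :
    relTrace σ (coboundary σ x + δ) = 0 := by
  have := relTrace_coboundary hσ x
  simp only [relTrace, map_add] at this hδ ⊢
  linear_combination this + hδ

theorem cDiffQuad_add_map {U : L} (hU : relTrace σ U = 0) (e : L) :
    cDiffQuad σ U e + σ (cDiffQuad σ U e) = σ (σ (coboundary σ e)) ^ 2 := by
  have hE := relTrace_coboundary hσ e
  rw [cDiffQuad, map_add, map_add, map_pairing hE hU]
  simp only [relTrace, coboundary_apply, map_add, map_mul, map_pow, hσ] at hE ⊢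
  grind

theorem sq_mul_pairing_eq {c U A e : L} (hU : relTrace σ U = 0) (hA : relTrace σ A = 0)
    (h : cDiffSq σ c U A e = 0) :
    (c + σ c) ^ 2 * pairing σ (coboundary σ e) A
      = ((1 + c) * (1 + σ c) * σ (σ (coboundary σ e))) ^ 2 := by
  have hσh := congrArg σ h
  rw [cDiffSq, map_add, map_mul, map_pairing (relTrace_coboundary hσ e) hA] at hσh
  simp only [map_add, map_pow, map_one, map_zero] at hσh
  have hQ := cDiffQuad_add_map hσ hU e
  rw [cDiffSq] at h
  grind

theorem sq_map_mul_pairing_eq {c U A e : L} (hU : relTrace σ U = 0) (hA : relTrace σ A = 0)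
    (h : cDiffSq σ c U A e = 0) :
    (σ c + σ (σ c)) ^ 2 * pairing σ (coboundary σ e) A
      = ((1 + σ c) * (1 + σ (σ c)) * coboundary σ e) ^ 2 := by
  have h' := congrArg σ (sq_mul_pairing_eq hσ hU hA h)
  simpa only [map_mul, map_pow, map_add, map_one, hσ,
    map_pairing (relTrace_coboundary hσ e) hA] using h'

theorem mul_map_map_coboundary_eq {c U A e : L} (hU : relTrace σ U = 0)
    (hA : relTrace σ A = 0) (h : cDiffSq σ c U A e = 0) :
    (σ c + σ (σ c)) * ((1 + c) * (1 + σ c)) * σ (σ (coboundary σ e))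
      = (c + σ c) * ((1 + σ c) * (1 + σ (σ c))) * coboundary σ e := by
  apply CharTwo.sq_injective
  dsimp only
  linear_combination (c + σ c) ^ 2 * sq_map_mul_pairing_eq hσ hU hA h
    - (σ c + σ (σ c)) ^ 2 * sq_mul_pairing_eq hσ hU hA h

theorem exists_map_eq_and_coboundary_eq_mul {c U A e f : L} (hc : σ c ≠ c)
    (hU : relTrace σ U = 0) (hA : relTrace σ A = 0) (hf : f ≠ 0)
    (hRe : cDiffSq σ c U A e = 0) (hRf : cDiffSq σ c U A f = 0) :
    ∃ ρ, σ ρ = ρ ∧ coboundary σ e = ρ * coboundary σ f := by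
  have hσc := map_ne_of_map_ne hc
  have hσσc := map_ne_of_map_ne hσc
  have hF := coboundary_ne_zero_of_cDiffSq_eq_zero hc hf hRf
  have heigE := mul_map_map_coboundary_eq hσ hU hA hRe
  have heigF := mul_map_map_coboundary_eq hσ hU hA hRf
  set E := coboundary σ e
  set F := coboundary σ f
  obtain ⟨ρ, hEρ⟩ : ∃ ρ, E = ρ * F := ⟨E / F, (div_mul_cancel₀ E hF).symm⟩
  refine ⟨ρ, ?_, hEρ⟩
  rw [hEρ, map_mul, map_mul] at heigE
  have hκ : (c + σ c) * ((1 + σ c) * (1 + σ (σ c))) * F ≠ 0 :=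
    mul_ne_zero (mul_ne_zero (CharTwo.add_eq_zero.not.mpr hc.symm) (mul_ne_zero
      (one_add_ne_zero_of_map_ne hσc) (one_add_ne_zero_of_map_ne hσσc))) hF
  have hρ2 : σ (σ ρ) = ρ := by
    have : (c + σ c) * ((1 + σ c) * (1 + σ (σ c))) * F * (σ (σ ρ) - ρ) = 0 := by
      linear_combination heigE - σ (σ ρ) * heigF
    simpa [hκ, sub_eq_zero] using this
  have := congrArg σ hρ2
  rwa [hσ, eq_comm] at this

theorem coboundary_eq_of_cDiffSq_eq_zero {c U A e f : L} (hc : σ c ≠ c)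
    (hU : relTrace σ U = 0) (hA : relTrace σ A = 0) (he : e ≠ 0) (hf : f ≠ 0)
    (hRe : cDiffSq σ c U A e = 0) (hRf : cDiffSq σ c U A f = 0) :
    coboundary σ e = coboundary σ f := by
  obtain ⟨ρ, hρ, hEρ⟩ := exists_map_eq_and_coboundary_eq_mul hσ hc hU hA hf hRe hRf
  have hσc := map_ne_of_map_ne hc
  have hσσc := map_ne_of_map_ne hσc
  have hE := coboundary_ne_zero_of_cDiffSq_eq_zero hc he hRe
  have hF := coboundary_ne_zero_of_cDiffSq_eq_zero hc hf hRf
  have hsqE := sq_map_mul_pairing_eq hσ hU hA hRe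
  have hsqF := sq_map_mul_pairing_eq hσ hU hA hRf
  set F := coboundary σ f
  rw [hEρ] at hE hsqE ⊢
  have hNF : pairing σ F A ≠ 0 := by
    intro h0
    rw [h0, mul_zero, eq_comm, pow_eq_zero_iff two_ne_zero] at hsqF
    exact mul_ne_zero (mul_ne_zero (one_add_ne_zero_of_map_ne hσc)
      (one_add_ne_zero_of_map_ne hσσc)) hF hsqF
  -- `pairing σ (ρ * F) A` is linear in `ρ` (as `σ ρ = ρ`) but quadratic by `hsqE`.
  have hlin : pairing σ (ρ * F) A = ρ * pairing σ F A := pairing_mul_left_of_map_eq hρ F A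
  have hquad : pairing σ (ρ * F) A = ρ ^ 2 * pairing σ F A := by
    apply mul_left_cancel₀ (pow_ne_zero 2 (CharTwo.add_eq_zero.not.mpr hσc.symm))
    linear_combination hsqE - ρ ^ 2 * hsqF
  have hρ1 : ρ = 1 := by
    have : ρ * (ρ - 1) * pairing σ F A = 0 := by linear_combination hlin - hquad
    simpa [left_ne_zero_of_mul hE, hNF, sub_eq_zero] using this
  rw [hρ1, one_mul]

theorem eq_of_cDiffSq_eq_zero {c U A e f : L} (hc : σ c ≠ c)
    (hU : relTrace σ U = 0) (hA : relTrace σ A = 0) (he : e ≠ 0) (hf : f ≠ 0)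
    (hRe : cDiffSq σ c U A e = 0) (hRf : cDiffSq σ c U A f = 0) : e = f := by
  have hEF := coboundary_eq_of_cDiffSq_eq_zero hσ hc hU hA he hf hRe hRf
  apply CharTwo.sq_injective
  apply mul_left_cancel₀ (one_add_sq_ne_zero_of_map_ne hc)
  have : cDiffSq σ c U A e = cDiffSq σ c U A f := by rw [hRe, hRf]
  simp only [cDiffSq, cDiffQuad, hEF] at this
  linear_combination this

theorem exists_pairing_coboundary_eq [Finite L]
    (hcard : Nat.card (coboundary σ).ker ^ 3 ≤ Nat.card L) {E M : L} (hE : E ≠ 0)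
    (hEtr : relTrace σ E = 0) (hM : σ M = M) : ∃ y, pairing σ E (coboundary σ y) = M := by
  set K := (coboundary σ).ker
  set Φ := (pairingHom σ E).comp (coboundary σ)
  have hΦ : ∀ y, Φ y ∈ K := fun y =>
    mem_ker_coboundary.mpr (map_pairing hEtr (relTrace_coboundary hσ y))
  have hker : Nat.card Φ.ker ≤ Nat.card K * Nat.card K := calc
    Nat.card Φ.ker ≤ Nat.card K * Nat.card (Φ.ker.map (coboundary σ)) :=
      AddSubgroup.card_le_card_ker_mul_card_map _ _
    _ ≤ Nat.card K * Nat.card (pairingHom σ E).ker := by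
      gcongr
      rw [← AddMonoidHom.comap_ker]
      exact AddSubgroup.card_le_of_le (AddSubgroup.map_comap_le _ _)
    _ ≤ Nat.card K * Nat.card K := by gcongr; exact card_ker_pairingHom_le hE
  have hsurj := AddMonoidHom.surjective_of_card_ker_le_div (Φ.codRestrict K hΦ) (by
    rw [AddMonoidHom.ker_codRestrict, Nat.le_div_iff_mul_le Nat.card_pos]
    calc Nat.card Φ.ker * Nat.card K ≤ Nat.card K * Nat.card K * Nat.card K := by gcongr
      _ = Nat.card K ^ 3 := by ring
      _ ≤ Nat.card L := hcard)
  obtain ⟨y, hy⟩ := hsurj ⟨M, mem_ker_coboundary.mpr hM⟩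
  exact ⟨y, congrArg Subtype.val hy⟩

theorem exists_cDiffSq_eq_zero [Finite L]
    (hcard : Nat.card (coboundary σ).ker ^ 3 ≤ Nat.card L) {c δ : L} (hc : σ c ≠ c)
    (hδ : relTrace σ δ = 0) :
    ∃ e x a, e ≠ 0 ∧ cDiffSq σ c (coboundary σ x + δ) (coboundary σ a) e = 0 := by
  set ε := 1 + c ^ 2
  obtain ⟨e, he⟩ := surjective_frobenius L 2 (σ ε⁻¹)
  rw [frobenius_def] at he
  have hσσe : σ (σ e) ^ 2 = ε⁻¹ := by rw [← map_pow, ← map_pow, he, hσ]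
  have hE : coboundary σ e ≠ 0 := by
    intro h
    rw [← AddMonoidHom.mem_ker, mem_ker_coboundary] at h
    have hεfix : σ ε⁻¹ = ε⁻¹ := by rw [← he, ← hσσe, h, h]
    rw [map_inv₀, inv_inj] at hεfix
    exact hc (by simpa [ε, CharTwo.sq_inj] using hεfix)
  -- `cDiffQuad σ δ e + σ (σ e) ^ 2` is `σ`-invariant by `cDiffQuad_add_map`, and the choice of
  -- `e` makes its second summand cancel against `(1 + c²)⁻¹`.
  set M := cDiffQuad σ δ e + σ (σ e) ^ 2
  have hM : σ M = M := by
    have hQ := cDiffQuad_add_map hσ hδ e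
    simp only [M, coboundary_apply, map_add, map_pow, hσ] at hQ ⊢
    grind
  have hEtr := relTrace_coboundary hσ e
  obtain ⟨x, hx⟩ := exists_pairing_coboundary_eq hσ hcard hE hEtr hM
  obtain ⟨a, ha⟩ := exists_pairing_coboundary_eq hσ hcard hE hEtr (map_one σ)
  refine ⟨e, x, a, fun h => hE (by rw [h, map_zero]), ?_⟩
  have hQ : cDiffQuad σ (coboundary σ x + δ) e
      = cDiffQuad σ δ e + pairing σ (coboundary σ e) (coboundary σ x) := by
    simp only [cDiffQuad, pairing, map_add]; ring
  rw [cDiffSq, ha, hQ, hx, ← add_assoc, CharTwo.add_self_eq_zero, zero_add, hσσe,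
    mul_inv_cancel₀ (one_add_sq_ne_zero_of_map_ne hc), CharTwo.add_self_eq_zero]

end Cubic

section Solutions

variable {G : L → L} {δ : L}
  (hG : ∀ x, G x ^ 2 = (coboundary σ x + δ) * σ (coboundary σ x + δ) + x ^ 2)
include hG

theorem sq_cDiff_eq (c x e a : L) :
    (G (x + e + a) + c * G (x + e) + (G (x + a) + c * G x)) ^ 2
      = cDiffSq σ c (coboundary σ x + δ) (coboundary σ a) e := by
  simp only [CharTwo.add_sq, mul_pow, hG, cDiffSq, cDiffQuad, pairing, map_add, coboundary_apply]
  grind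

theorem eq_iff_cDiffSq_eq_zero {c a b x₀ : L} (hx₀ : G (x₀ + a) + c * G x₀ = b) (x : L) :
    G (x + a) + c * G x = b
      ↔ cDiffSq σ c (coboundary σ x₀ + δ) (coboundary σ a) (x + x₀) = 0 := by
  have hx : x₀ + (x + x₀) = x := by rw [add_comm x, CharTwo.add_cancel_left]
  rw [← sq_cDiff_eq hG, hx, hx₀, pow_eq_zero_iff two_ne_zero, CharTwo.add_eq_zero]

variable (hσ : ∀ x, σ (σ (σ x)) = x) {c : L} (hc : σ c ≠ c) (hδ : relTrace σ δ = 0)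
include hσ hc hδ

theorem ncard_solutions_le_two [Finite L] (a b : L) :
    {x | G (x + a) + c * G x = b}.ncard ≤ 2 := by
  by_contra! h
  obtain ⟨x₁, h₁, x₂, h₂, x₃, h₃, h₁₂, h₁₃, h₂₃⟩ := (Set.two_lt_ncard (Set.toFinite _)).mp h
  rw [Set.mem_ofPred_eq] at h₁ h₂ h₃
  rw [eq_iff_cDiffSq_eq_zero hG h₁] at h₂ h₃
  have hne : ∀ {y}, y ≠ x₁ → y + x₁ ≠ 0 := fun hy h => hy (CharTwo.add_eq_zero.mp h)
  exact h₂₃ (add_right_cancel (eq_of_cDiffSq_eq_zero hσ hc (relTrace_coboundary_add hσ hδ x₁)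
    (relTrace_coboundary hσ a) (hne h₁₂.symm) (hne h₁₃.symm) h₂ h₃))

theorem exists_ncard_solutions_eq_two [Finite L]
    (hcard : Nat.card (coboundary σ).ker ^ 3 ≤ Nat.card L) :
    ∃ a b, {x | G (x + a) + c * G x = b}.ncard = 2 := by
  obtain ⟨e, x₀, a, he, hR⟩ := exists_cDiffSq_eq_zero hσ hcard hc hδ
  refine ⟨a, G (x₀ + a) + c * G x₀, ?_⟩
  have hS : {x | G (x + a) + c * G x = G (x₀ + a) + c * G x₀} = {x₀, e + x₀} := by
    ext x
    rw [Set.mem_ofPred_eq, eq_iff_cDiffSq_eq_zero hG rfl, Set.mem_insert_iff,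
      Set.mem_singleton_iff]
    constructor
    · intro hx
      by_cases h0 : x + x₀ = 0
      · exact Or.inl (CharTwo.add_eq_zero.mp h0)
      · exact Or.inr (CharTwo.add_eq_iff_eq_add.mp (eq_of_cDiffSq_eq_zero hσ hc
          (relTrace_coboundary_add hσ hδ x₀) (relTrace_coboundary hσ a) h0 he hx hR))
    · rintro (rfl | rfl)
      · rw [CharTwo.add_self_eq_zero, cDiffSq_zero]
      · rwa [CharTwo.add_cancel_right]
  rw [hS, Set.ncard_pair]
  simpa using he

end Solutions

end CubicFrobenius

section FiniteField

open Polynomial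

variable {F : Type*} [Field F] [Fintype F] {m : ℕ}

theorem iterateFrobenius_iterate_three {p : ℕ} [Fact p.Prime] [CharP F p]
    (hF : Fintype.card F = p ^ (3 * m)) (x : F) :
    iterateFrobenius F p m (iterateFrobenius F p m (iterateFrobenius F p m x)) = x := by
  simp only [iterateFrobenius_def, ← pow_mul, ← pow_add]
  rw [show m + m + m = 3 * m by ring, ← hF, FiniteField.pow_card]

variable [CharP F 2]

theorem card_ker_coboundary_iterateFrobenius_le (hm : m ≠ 0) :
    Nat.card (CubicFrobenius.coboundary (iterateFrobenius F 2 m)).ker ≤ 2 ^ m := by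
  have hP : (X ^ 2 ^ m - X : F[X]) ≠ 0 :=
    FiniteField.X_pow_card_pow_sub_X_ne_zero F hm one_lt_two
  rw [← SetLike.coe_sort_coe, Nat.card_coe_set_eq,
    ← FiniteField.X_pow_card_pow_sub_X_natDegree_eq F hm one_lt_two]
  refine (Set.ncard_le_ncard (fun x hx => ?_) (Set.toFinite _)).trans (ncard_rootSet_le _ F)
  rw [SetLike.mem_coe, CubicFrobenius.mem_ker_coboundary, iterateFrobenius_def] at hx
  rw [mem_rootSet, aeval_def, eval₂_sub, eval₂_X_pow, eval₂_X, hx, sub_self]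
  exact ⟨hP, rfl⟩

theorem sq_pow_eq_mul_iterateFrobenius (hm : 0 < m) (hF : Fintype.card F = 2 ^ (3 * m))
    (u : F) : (u ^ (2 ^ (3 * m - 1) + 2 ^ (m - 1))) ^ 2 = u * iterateFrobenius F 2 m u := by
  rw [← pow_mul, add_mul, ← pow_succ, ← pow_succ, Nat.sub_add_cancel (by omega),
    Nat.sub_add_cancel hm, pow_add, ← hF, FiniteField.pow_card, iterateFrobenius_def]

end FiniteField

open CubicFrobenius in
theorem stmt_12_general (m : ℕ) (hm : 0 < m) (F : Type*) [Field F] [Fintype F]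
    (hF : Fintype.card F = 2 ^ (3 * m)) (δ c : F)
    (hδ : δ + δ ^ (2 ^ m) + δ ^ (2 ^ (2 * m)) = 0)
    (hc : c ^ (2 ^ m) ≠ c)
    (G : F → F)
    (hG : ∀ x, G x = (x ^ (2 ^ m) + x + δ) ^ (2 ^ (3 * m - 1) + 2 ^ (m - 1)) + x) :
    (∀ a b : F, {x : F | G (x + a) + c * G x = b}.ncard ≤ 2) ∧
    (∃ a b : F, {x : F | G (x + a) + c * G x = b}.ncard = 2) := by
  have : CharP F 2 := charP_of_card_eq_prime_pow hF
  set σ := iterateFrobenius F 2 m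
  have hσ : ∀ x, σ (σ (σ x)) = x := iterateFrobenius_iterate_three hF
  have hcard : Nat.card (coboundary σ).ker ^ 3 ≤ Nat.card F := by
    rw [Nat.card_eq_fintype_card (α := F), hF, pow_mul']
    exact Nat.pow_le_pow_left (card_ker_coboundary_iterateFrobenius_le hm.ne') 3
  have hδ' : relTrace σ δ = 0 := by
    rwa [relTrace, iterateFrobenius_def, iterateFrobenius_def, ← pow_mul, ← pow_add, ← two_mul]
  have hG' : ∀ x, G x ^ 2 = (coboundary σ x + δ) * σ (coboundary σ x + δ) + x ^ 2 := fun x => by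
    rw [hG, CharTwo.add_sq, sq_pow_eq_mul_iterateFrobenius hm hF]
    rfl
  exact ⟨ncard_solutions_le_two hG' hσ hc hδ', exists_ncard_solutions_eq_two hG' hσ hc hδ' hcard⟩

theorem stmt_12 (m : ℕ) (hm : 0 < m) (hm3 : (2 * m) % 3 ≠ 1) (F : Type*) [Field F] [Fintype F]
    (hF : Fintype.card F = 2 ^ (3 * m)) (δ c : F)
    (hδ : δ + δ ^ (2 ^ m) + δ ^ (2 ^ (2 * m)) = 0)
    (hc : c ^ (2 ^ m) ≠ c)
    (G : F → F)
    (hG : ∀ x, G x = (x ^ (2 ^ m) + x + δ) ^ (2 ^ (3 * m - 1) + 2 ^ (m - 1)) + x) :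
    (∀ a b : F, {x : F | G (x + a) + c * G x = b}.ncard ≤ 2) ∧
    (∃ a b : F, {x : F | G (x + a) + c * G x = b}.ncard = 2) :=
  stmt_12_general m hm F hF δ c hδ hc G hG
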